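/- Let R be a ring, F a class of left R-modules defining a homological dimension, closed under finite direct sums, with the class of homomorphic images of F closed under extensions. For a short exact sequence 0 → A → B → C → 0: if B has F-dimension ≤ i and C has F-dimension ≤ i + 1, then A has F-dimension ≤ i. -/

import Mathlib

open CategoryTheory

universe u

noncomputable section

variable {R : Type u} [Ring R]

/-- Membership in `F ∪ {0}`. -/
def MemF0 (F : ModuleCat.{u} R → Prop) (M : ModuleCat.{u} R) : Prop :=
  F M ∨ Subsingleton M

/-- There is a short exact sequence `0 → A → B → C → 0`. -/
def IsSES {R : Type u} [Ring R] (A B C : ModuleCat.{u} R) : Prop :=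
  ∃ (f : A ⟶ B) (g : B ⟶ C),
    Function.Injective f ∧ Function.Surjective g ∧ Function.Exact f g

/-- `FDimLE F n M` : `M` has left `F`-dimension `≤ n`, i.e. there is an exact sequence
`0 → F_n → ⋯ → F_0 → M → 0` with all `F_j ∈ F ∪ {0}`. -/
def FDimLE (F : ModuleCat.{u} R → Prop) : ℕ → ModuleCat.{u} R → Prop
  | 0, M => MemF0 F M
  | n + 1, M => ∃ K F0 : ModuleCat.{u} R, MemF0 F F0 ∧ IsSES K F0 M ∧ FDimLE F n K

/-- `M` admits a (possibly infinite) `F`-resolution `⋯ → F_1 → F_0 → M → 0`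
with all terms in `F ∪ {0}`. -/
def HasFRes (F : ModuleCat.{u} R → Prop) (M : ModuleCat.{u} R) : Prop :=
  ∃ K Fo : ℕ → ModuleCat.{u} R, K 0 = M ∧
    ∀ n, MemF0 F (Fo n) ∧ IsSES (K (n + 1)) (Fo n) (K n)

/-- `IsFKernel F n K X` : there is an exact sequence
`0 → K → F_n → ⋯ → F_0 → X → 0` with all `F_i ∈ F`. -/
def IsFKernel (F : ModuleCat.{u} R → Prop) : ℕ → ModuleCat.{u} R → ModuleCat.{u} R → Prop
  | 0, K, X => ∃ F0, F F0 ∧ IsSES K F0 X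
  | n + 1, K, X => ∃ K1 F0, F F0 ∧ IsSES K1 F0 X ∧ IsFKernel F n K K1

/-- The class `F` defines a homological dimension. -/
def DefinesHomDim (F : ModuleCat.{u} R → Prop) : Prop :=
  (∀ K Fm M : ModuleCat.{u} R, F Fm → IsSES K Fm M → HasFRes F M → HasFRes F K) ∧
  (∀ (n : ℕ) (K X : ModuleCat.{u} R), FDimLE F (n + 1) X → IsFKernel F n K X → F K)

/-- `M` is a homomorphic image of a module in `F`. -/
def IsImageOfF (F : ModuleCat.{u} R → Prop) (M : ModuleCat.{u} R) : Prop :=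
  ∃ F0 : ModuleCat.{u} R, F F0 ∧ ∃ g : F0 ⟶ M, Function.Surjective g

/-- `F` is closed under finite (binary) direct sums. -/
def ClosedUnderFinSums (F : ModuleCat.{u} R → Prop) : Prop :=
  ∀ A B : ModuleCat.{u} R, F A → F B → F (ModuleCat.of R (A × B))

/-- The class of homomorphic images of modules in `F` is closed under extensions. -/
def ImagesClosedUnderExt (F : ModuleCat.{u} R → Prop) : Prop :=
  ∀ (A B C : ModuleCat.{u} R) (f : A ⟶ B) (g : B ⟶ C),
    Function.Injective f → Function.Surjective g → Function.Exact f g →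
      IsImageOfF F A → IsImageOfF F C → IsImageOfF F B

/-- `Ext^i(M, N)` vanishes. -/
def ExtZero {R : Type u} [Ring R] (i : ℕ) (M N : ModuleCat.{u} R) : Prop :=
  Subsingleton (((Ext ℤ (ModuleCat.{u} R) i).obj (Opposite.op M)).obj N)

end

/-!
Cover `B` by `0 → K → P → B → 0` with `P ∈ F ∪ {0}` and `F`-dim `K ≤ i`. The pullback `L` of
`P → B ← A` fits into `0 → L → P → C → 0` and `0 → K → L → A → 0`. The second axiom of a
homological dimension says that the kernel of a cover of a module of `F`-dimension `≤ n + 1`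
has `F`-dimension `≤ n`, so `F`-dim `L ≤ i + 1`. Covering `L` by some `P' ∈ F ∪ {0}`, the kernel
`N` of `K ⊕ P' → L` is also the kernel of `P' → A`; since `F`-dim `(K ⊕ P') ≤ i`, induction on
`i` applied to `0 → N → K ⊕ P' → L → 0` gives `F`-dim `N ≤ i`, hence `F`-dim `A ≤ i + 1`.
-/

variable {R : Type u} [Ring R] {F : ModuleCat.{u} R → Prop}

theorem isSES_ker {B C : ModuleCat.{u} R} (g : B ⟶ C) (hg : Function.Surjective g) :
    IsSES (ModuleCat.of R (LinearMap.ker g.hom)) B C :=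
  ⟨ModuleCat.ofHom (LinearMap.ker g.hom).subtype, g, Subtype.val_injective, hg,
    LinearMap.exact_subtype_ker_map g.hom⟩

theorem isSES_of_subsingleton (K M : ModuleCat.{u} R) [Subsingleton K] : IsSES K M M :=
  ⟨0, 𝟙 M, fun _ _ _ => Subsingleton.elim _ _, Function.surjective_id,
    (LinearMap.exact_zero_iff_injective K LinearMap.id).mpr Function.injective_id⟩

theorem IsSES.of_linearEquiv {K B C K' B' C' : ModuleCat.{u} R} (e₁ : K ≃ₗ[R] K')
    (e₂ : B ≃ₗ[R] B') (e₃ : C ≃ₗ[R] C') (h : IsSES K B C) : IsSES K' B' C' := by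
  obtain ⟨f, g, hf, hg, hfg⟩ := h
  refine ⟨ModuleCat.ofHom (e₂.toLinearMap ∘ₗ f.hom ∘ₗ e₁.symm.toLinearMap),
    ModuleCat.ofHom (e₃.toLinearMap ∘ₗ g.hom ∘ₗ e₂.symm.toLinearMap),
    e₂.injective.comp (hf.comp e₁.symm.injective),
    e₃.surjective.comp (hg.comp e₂.symm.surjective), ?_⟩
  exact Function.Exact.of_ladder_linearEquiv_of_exact (e₁ := e₁) (e₂ := e₂) (e₃ := e₃)
    (by ext; simp) (by ext; simp) hfg

theorem IsSES.prod {KX FX X KY FY Y : ModuleCat.{u} R} (hX : IsSES KX FX X)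
    (hY : IsSES KY FY Y) :
    IsSES (ModuleCat.of R (KX × KY)) (ModuleCat.of R (FX × FY)) (ModuleCat.of R (X × Y)) := by
  obtain ⟨kx, px, hkx, hpx, hkpx⟩ := hX
  obtain ⟨ky, py, hky, hpy, hkpy⟩ := hY
  refine ⟨ModuleCat.ofHom (kx.hom.prodMap ky.hom), ModuleCat.ofHom (px.hom.prodMap py.hom),
    hkx.prodMap hky, hpx.prodMap hpy, fun z => ?_⟩
  simp only [ModuleCat.hom_ofHom, LinearMap.prodMap_apply, Prod.ext_iff, Prod.fst_zero,
    Prod.snd_zero, hkpx z.1, hkpy z.2, Set.mem_range]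
  exact ⟨fun ⟨⟨a, ha⟩, b, hb⟩ => ⟨(a, b), ha, hb⟩, fun ⟨y, ha, hb⟩ => ⟨⟨_, ha⟩, _, hb⟩⟩

theorem IsSES.exists_pullback {K P B A C : ModuleCat.{u} R} (hP : IsSES K P B)
    (hB : IsSES A B C) : ∃ L : ModuleCat.{u} R, IsSES L P C ∧ IsSES K L A := by
  obtain ⟨k, π, hk, hπ, hkπ⟩ := hP
  obtain ⟨f, g, hf, hg, hfg⟩ := hB
  let Q := LinearMap.eqLocus (π.hom ∘ₗ LinearMap.fst R P A) (f.hom ∘ₗ LinearMap.snd R P A)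
  have hk0 : ∀ x, (k x, (0 : A)) ∈ Q := fun x => by
    simp [Q, LinearMap.mem_eqLocus, hkπ.apply_apply_eq_zero]
  have hQ : ∀ q : Q, π q.1.1 = f q.1.2 := fun q => q.2
  refine ⟨ModuleCat.of R Q,
    ⟨ModuleCat.ofHom (LinearMap.fst R P A ∘ₗ Q.subtype), π ≫ g, ?_, hg.comp hπ, ?_⟩,
    ⟨ModuleCat.ofHom (LinearMap.codRestrict Q (LinearMap.inl R P A ∘ₗ k.hom) hk0),
      ModuleCat.ofHom (LinearMap.snd R P A ∘ₗ Q.subtype), ?_, ?_, ?_⟩⟩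
  · intro q q' h
    have h1 : q.1.1 = q'.1.1 := h
    exact Subtype.ext (Prod.ext h1 (hf (by rw [← hQ, ← hQ, h1])))
  · intro p
    constructor
    · intro hp
      obtain ⟨a, ha⟩ := (hfg (π p)).mp hp
      exact ⟨⟨(p, a), ha.symm⟩, rfl⟩
    · rintro ⟨q, rfl⟩
      show g (π q.1.1) = 0
      rw [hQ, hfg.apply_apply_eq_zero]
  · intro x y h
    exact hk (congrArg (fun q : Q => q.1.1) h)
  · intro a
    obtain ⟨p, hp⟩ := hπ (f a)
    exact ⟨⟨(p, a), hp⟩, rfl⟩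
  · intro q
    constructor
    · intro hq
      have hq2 : q.1.2 = 0 := hq
      obtain ⟨x, hx⟩ := (hkπ q.1.1).mp (by rw [hQ, hq2, map_zero])
      exact ⟨x, Subtype.ext (Prod.ext hx hq2.symm)⟩
    · rintro ⟨x, rfl⟩
      rfl

theorem IsSES.exists_isSES_prod_of_surjective {K L A P : ModuleCat.{u} R} (h : IsSES K L A)
    (p : P ⟶ L) (hp : Function.Surjective p) :
    ∃ N : ModuleCat.{u} R, IsSES N (ModuleCat.of R (K × P)) L ∧ IsSES N P A := by
  obtain ⟨k, t, hk, ht, hkt⟩ := h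
  let N := LinearMap.ker (k.hom.coprod p.hom)
  have hN : ∀ n : N, k n.1.1 + p n.1.2 = 0 := fun n => n.2
  refine ⟨ModuleCat.of R N,
    isSES_ker (ModuleCat.ofHom (k.hom.coprod p.hom)) ?_,
    ModuleCat.ofHom (LinearMap.snd R K P ∘ₗ N.subtype), p ≫ t, ?_, ht.comp hp, ?_⟩
  · intro y
    obtain ⟨x, rfl⟩ := hp y
    exact ⟨(0, x), by simp⟩
  · intro n n' hnn'
    have h2 : n.1.2 = n'.1.2 := hnn'
    have h1 : k n.1.1 = k n'.1.1 := by
      rw [eq_neg_of_add_eq_zero_left (hN n), eq_neg_of_add_eq_zero_left (hN n'), h2]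
    exact Subtype.ext (Prod.ext (hk h1) h2)
  · intro y
    constructor
    · intro hy
      obtain ⟨x, hx⟩ := (hkt (p y)).mp hy
      exact ⟨⟨(-x, y), by simp [N, hx]⟩, rfl⟩
    · rintro ⟨n, rfl⟩
      show t (p n.1.2) = 0
      rw [eq_neg_of_add_eq_zero_right (hN n), ← map_neg, hkt.apply_apply_eq_zero]

theorem FDimLE.succ {n : ℕ} {M : ModuleCat.{u} R} : FDimLE F n M → FDimLE F (n + 1) M := by
  induction n generalizing M with
  | zero =>
    exact fun hM => ⟨ModuleCat.of R PUnit, M, hM, isSES_of_subsingleton _ M, Or.inr inferInstance⟩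
  | succ n ih => exact fun ⟨K, P, hP, hKPM, hK⟩ => ⟨K, P, hP, hKPM, ih hK⟩

theorem FDimLE.mono {m n : ℕ} {M : ModuleCat.{u} R} (hM : FDimLE F m M) (hmn : m ≤ n) :
    FDimLE F n M := by
  induction hmn with
  | refl => exact hM
  | step _ ih => exact ih.succ

theorem FDimLE.of_memF0 (n : ℕ) {M : ModuleCat.{u} R} (hM : MemF0 F M) : FDimLE F n M :=
  FDimLE.mono (m := 0) hM n.zero_le

theorem HasFRes.cons {K P M : ModuleCat.{u} R} (hP : MemF0 F P) (h : IsSES K P M)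
    (hK : HasFRes F K) : HasFRes F M := by
  obtain ⟨Ks, Ps, rfl, hres⟩ := hK
  refine ⟨fun j => Nat.casesOn j M Ks, fun j => Nat.casesOn j P Ps, rfl, ?_⟩
  rintro (_ | j)
  exacts [⟨hP, h⟩, hres j]

theorem hasFRes_punit : HasFRes F (ModuleCat.of R PUnit.{u + 1}) :=
  ⟨fun _ => ModuleCat.of R PUnit, fun _ => ModuleCat.of R PUnit, rfl,
    fun _ => ⟨Or.inr inferInstance, isSES_of_subsingleton _ _⟩⟩

theorem FDimLE.hasFRes {n : ℕ} {M : ModuleCat.{u} R} (hM : FDimLE F n M) : HasFRes F M := by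
  induction n generalizing M with
  | zero => exact hasFRes_punit.cons hM (isSES_of_subsingleton _ M)
  | succ n ih =>
    obtain ⟨K, P, hP, hKPM, hK⟩ := hM
    exact (ih hK).cons hP hKPM

section Resolution

variable {Ks Ps : ℕ → ModuleCat.{u} R}

theorem fDimLE_of_resolution (hres : ∀ j, MemF0 F (Ps j) ∧ IsSES (Ks (j + 1)) (Ps j) (Ks j))
    {n : ℕ} (hn : MemF0 F (Ks n)) : FDimLE F n (Ks 0) := by
  induction n generalizing Ks Ps with
  | zero => exact hn
  | succ n ih =>
    exact ⟨Ks 1, Ps 0, (hres 0).1, (hres 0).2,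
      ih (Ks := fun j => Ks (j + 1)) (Ps := fun j => Ps (j + 1)) (fun j => hres (j + 1)) hn⟩

theorem isFKernel_of_resolution (hres : ∀ j, IsSES (Ks (j + 1)) (Ps j) (Ks j)) {n : ℕ}
    (hPs : ∀ j < n, F (Ps j)) {P M : ModuleCat.{u} R} (hP : F P) (h : IsSES (Ks 0) P M) :
    IsFKernel F n (Ks n) M := by
  induction n generalizing Ks Ps P M with
  | zero => exact ⟨P, hP, h⟩
  | succ n ih =>
    exact ⟨Ks 0, P, hP, h, ih (Ks := fun j => Ks (j + 1)) (Ps := fun j => Ps (j + 1))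
      (fun j => hres (j + 1)) (fun j hj => hPs (j + 1) (by omega)) (hPs 0 n.succ_pos) (hres 0)⟩

end Resolution

theorem FDimLE.left_of_isSES_of_memF0 (hF : DefinesHomDim F) {n : ℕ} {K P M : ModuleCat.{u} R}
    (hP : MemF0 F P) (h : IsSES K P M) (hM : FDimLE F (n + 1) M) : FDimLE F n K := by
  rcases hP with hP | hP
  swap
  · obtain ⟨k, -, hk, -⟩ := h
    exact .of_memF0 n (Or.inr hk.subsingleton)
  obtain ⟨Ks, Ps, rfl, hres⟩ := hF.1 K P M hP h hM.hasFRes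
  by_cases hPs : ∀ j < n, F (Ps j)
  · exact fDimLE_of_resolution hres
      (Or.inl (hF.2 n _ M hM (isFKernel_of_resolution (fun j => (hres j).2) hPs hP h)))
  · push Not at hPs
    obtain ⟨j, hjn, hj⟩ := hPs
    have : Subsingleton (Ps j) := (hres j).1.resolve_left hj
    obtain ⟨k, -, hk, -⟩ := (hres j).2
    exact (fDimLE_of_resolution hres (n := j + 1) (Or.inr hk.subsingleton)).mono hjn

-- `F` need not be closed under isomorphism, so sums are only available up to a linear equivalence.
theorem MemF0.exists_linearEquiv_prod (hsum : ClosedUnderFinSums F) {X Y : ModuleCat.{u} R}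
    (hX : MemF0 F X) (hY : MemF0 F Y) :
    ∃ Z : ModuleCat.{u} R, Nonempty (Z ≃ₗ[R] X × Y) ∧ MemF0 F Z := by
  rcases hX with hX | hX
  · rcases hY with hY | hY
    · exact ⟨_, ⟨LinearEquiv.refl R _⟩, Or.inl (hsum X Y hX hY)⟩
    · let := uniqueOfSubsingleton (0 : Y)
      exact ⟨X, ⟨LinearEquiv.prodUnique.symm⟩, Or.inl hX⟩
  · let := uniqueOfSubsingleton (0 : X)
    exact ⟨Y, ⟨LinearEquiv.uniqueProd.symm⟩, hY⟩

theorem FDimLE.exists_linearEquiv_prod (hsum : ClosedUnderFinSums F) {n : ℕ}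
    {X Y : ModuleCat.{u} R} (hX : FDimLE F n X) (hY : FDimLE F n Y) :
    ∃ Z : ModuleCat.{u} R, Nonempty (Z ≃ₗ[R] X × Y) ∧ FDimLE F n Z := by
  induction n generalizing X Y with
  | zero => exact MemF0.exists_linearEquiv_prod hsum hX hY
  | succ n ih =>
    obtain ⟨KX, PX, hPX, hX, hKX⟩ := hX
    obtain ⟨KY, PY, hPY, hY, hKY⟩ := hY
    obtain ⟨K, ⟨eK⟩, hK⟩ := ih hKX hKY
    obtain ⟨P, ⟨eP⟩, hP⟩ := MemF0.exists_linearEquiv_prod hsum hPX hPY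
    exact ⟨ModuleCat.of R (X × Y), ⟨LinearEquiv.refl R _⟩, K, P, hP,
      (hX.prod hY).of_linearEquiv eK.symm eP.symm (LinearEquiv.refl R _), hK⟩

theorem FDimLE.right_of_isSES (hsum : ClosedUnderFinSums F) {i : ℕ}
    (IH : ∀ {A B C : ModuleCat.{u} R}, IsSES A B C → FDimLE F i B → FDimLE F (i + 1) C →
      FDimLE F i A)
    {K L A : ModuleCat.{u} R} (h : IsSES K L A) (hK : FDimLE F i K)
    (hL : FDimLE F (i + 1) L) : FDimLE F (i + 1) A := by
  obtain ⟨-, P, hP, ⟨-, p, -, hp, -⟩, -⟩ := id hL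
  obtain ⟨N, hNL, hNA⟩ := h.exists_isSES_prod_of_surjective p hp
  obtain ⟨Z, ⟨e⟩, hZ⟩ := hK.exists_linearEquiv_prod hsum (FDimLE.of_memF0 i hP)
  exact ⟨N, P, hP, hNA, IH (hNL.of_linearEquiv (.refl R _) e.symm (.refl R _)) hZ hL⟩

theorem FDimLE.left_of_isSES (hF : DefinesHomDim F) (hsum : ClosedUnderFinSums F) {i : ℕ}
    {A B C : ModuleCat.{u} R} (h : IsSES A B C) (hB : FDimLE F i B)
    (hC : FDimLE F (i + 1) C) : FDimLE F i A := by
  induction i generalizing A B C with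
  | zero => exact FDimLE.left_of_isSES_of_memF0 hF hB h hC
  | succ i ih =>
    obtain ⟨K, P, hP, hKPB, hK⟩ := hB
    obtain ⟨L, hLPC, hKLA⟩ := hKPB.exists_pullback h
    exact FDimLE.right_of_isSES hsum ih hKLA hK (FDimLE.left_of_isSES_of_memF0 hF hP hLPC hC)

theorem stmt7_general {R : Type u} [Ring R] (F : ModuleCat.{u} R → Prop)
    (hF : DefinesHomDim F) (hsum : ClosedUnderFinSums F)
    (A B C : ModuleCat.{u} R) (f : A ⟶ B) (g : B ⟶ C)
    (hinj : Function.Injective f) (hsurj : Function.Surjective g)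
    (hex : Function.Exact f g) (i : ℕ)
    (hB : FDimLE F i B) (hC : FDimLE F (i + 1) C) :
    FDimLE F i A :=
  FDimLE.left_of_isSES hF hsum ⟨f, g, hinj, hsurj, hex⟩ hB hC

theorem stmt7 {R : Type u} [Ring R] (F : ModuleCat.{u} R → Prop)
    (hF : DefinesHomDim F) (hsum : ClosedUnderFinSums F)
    (himg : ImagesClosedUnderExt F)
    (A B C : ModuleCat.{u} R) (f : A ⟶ B) (g : B ⟶ C)
    (hinj : Function.Injective f) (hsurj : Function.Surjective g)
    (hex : Function.Exact f g) (i : ℕ)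
    (hB : FDimLE F i B) (hC : FDimLE F (i + 1) C) :
    FDimLE F i A :=
  stmt7_general F hF hsum A B C f g hinj hsurj hex i hB hC
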